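/- Let q = 2 and let z ∈ 𝕋ⁿ be such that H₀(z) conj(H₁(z)) ≠ 0 and 1 − |H₀(z)|² − |H₁(z)|² ≠ 0. If b₀, b₁, b₂ ∈ ℂ satisfy Φ_H(z) · diag(b₀, b₁, b₂) · Φ_H*(z) = I, then b₀ = 2 − |H₀(z)|² − |H₁(z)|² and b₁ = b₂ = 1. -/

import Mathlib

/-!
With `A = |H₀(z)|²` and `C = |H₁(z)|²`, the off-diagonal entry of `Φ_H diag(b) Φ_H*` is
`H₀ conj(H₁) · (b₀ − b₁(1 − A) − b₂(1 − C))`, which pins down `b₀`. Substituting it into the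
diagonal entries leaves the linear system `b₁(1 − A) + b₂A = 1 = b₁C + b₂(1 − C)`, whose
determinant is `1 − A − C`.
-/

open Matrix Complex

/-- The LP² matrix `Φ_H = [H, I − H H*]` built from the vector of values
`h = H(z)` at a point `z ∈ 𝕋ⁿ` (on the torus `H*(z)` has entries `conj`). -/
noncomputable def PhiV {q : ℕ} (h : Fin q → ℂ) : Matrix (Fin q) (Fin (q + 1)) ℂ :=
  Matrix.of fun i j =>
    if hj : j = 0 then h i
    else (if i = j.pred hj then (1 : ℂ) else 0) - h i * (starRingEnd ℂ) (h (j.pred hj))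

open ComplexConjugate

theorem PhiV_mul_diagonal_mul_conjTranspose_apply {q : ℕ} (h : Fin q → ℂ)
    (b : Fin (q + 1) → ℂ) (i k : Fin q) :
    (PhiV h * diagonal b * (PhiV h)ᴴ) i k =
      b 0 * h i * conj (h k) + ∑ j, b j.succ * ((if i = j then 1 else 0) - h i * conj (h j)) *
        ((if j = k then 1 else 0) - h j * conj (h k)) := by
  simp only [PhiV, diagonal, mul_apply, of_apply, eq_comm, mul_ite, dite_mul, mul_zero,
    Finset.sum_ite_eq, Finset.mem_univ, ↓reduceIte, conjTranspose_apply, RCLike.star_def,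
    Fin.sum_univ_succ, ↓reduceDIte, Fin.succ_ne_zero, Fin.pred_succ, map_sub,
    MonoidWithZeroHom.map_ite_one_zero, map_mul, RingHomCompTriple.comp_apply, RingHom.id_apply]
  exact congrArg₂ (· + ·) (by ring) (Finset.sum_congr rfl fun j _ => by ring)

theorem lp2_scaling_coeffs_of_entry_equations {K : Type*} [Field K] {a c b₀ b₁ b₂ : K}
    (hac : 1 - a - c ≠ 0) (hoff : b₀ = b₁ * (1 - a) + b₂ * (1 - c))
    (h₀ : b₀ * a + b₁ * (1 - a) ^ 2 + b₂ * (a * c) = 1)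
    (h₁ : b₀ * c + b₁ * (a * c) + b₂ * (1 - c) ^ 2 = 1) :
    b₀ = 2 - a - c ∧ b₁ = 1 ∧ b₂ = 1 := by
  have e₀ : b₁ * (1 - a) + b₂ * a = 1 := by linear_combination h₀ - a * hoff
  have e₁ : b₁ * c + b₂ * (1 - c) = 1 := by linear_combination h₁ - c * hoff
  have hb : b₁ = b₂ := by
    refine sub_eq_zero.mp (mul_left_cancel₀ hac ?_)
    linear_combination e₀ - e₁
  subst hb
  have hb₁ : b₁ = 1 := by linear_combination e₀
  exact ⟨by rw [hoff, hb₁]; ring, hb₁, hb₁⟩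

theorem lp2_scaling_unique_q2 (h : Fin 2 → ℂ)
    (h1 : h 0 * (starRingEnd ℂ) (h 1) ≠ 0)
    (h2 : (1 : ℝ) - Complex.normSq (h 0) - Complex.normSq (h 1) ≠ 0)
    (b : Fin 3 → ℂ)
    (hb : PhiV h * Matrix.diagonal b * (PhiV h)ᴴ = 1) :
    b 0 = ((2 : ℝ) - Complex.normSq (h 0) - Complex.normSq (h 1) : ℝ) ∧
    b 1 = 1 ∧ b 2 = 1 := by
  have entry (i k : Fin 2) := (PhiV_mul_diagonal_mul_conjTranspose_apply h b i k).symm.trans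
    (congr_fun (congr_fun hb i) k)
  have e₀₀ := entry 0 0
  have e₁₁ := entry 1 1
  have e₀₁ := entry 0 1
  simp only [Fin.isValue, Fin.sum_univ_two, Fin.succ_zero_eq_one, ↓reduceIte,
    Fin.succ_one_eq_two, zero_ne_one, zero_sub, mul_neg, one_ne_zero, neg_mul, neg_neg,
    one_apply_eq, ne_eq, not_false_eq_true, one_apply_ne] at e₀₀ e₁₁ e₀₁
  obtain ⟨hb₀, hb₁, hb₂⟩ := lp2_scaling_coeffs_of_entry_equations
    (a := h 0 * conj (h 0)) (c := h 1 * conj (h 1)) (b₀ := b 0) (b₁ := b 1) (b₂ := b 2)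
    (by rw [mul_conj, mul_conj]; exact_mod_cast h2)
    (sub_eq_zero.mp <| (mul_eq_zero.mp (by linear_combination e₀₁)).resolve_left h1)
    (by linear_combination e₀₀) (by linear_combination e₁₁)
  refine ⟨?_, hb₁, hb₂⟩
  rw [hb₀, mul_conj, mul_conj]
  push_cast
  ring
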